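/- For the Barenblatt–Pattle solution with k = 1/(m+1), m > 1, the total mass ∫_ℝ u(x,t) dx is independent of t: for all t ≥ 0, ∫_ℝ u(x,t)dx = ∫_ℝ u(x,0)dx. -/
import Mathlib


open MeasureTheory

/-- The Barenblatt--Pattle profile, with k = 1/(m+1). -/
noncomputable def barenblatt (m t0 A : ℝ) (x t : ℝ) : ℝ :=
  (t + t0) ^ (-(1/(m+1))) *
    (max (A^2 - (1/(m+1)) * (m-1) * x^2 / (2 * m * (t + t0) ^ (2 * (1/(m+1))))) 0)
      ^ (1/(m-1))

lemma barenblatt_integral_eq (m t0 A t : ℝ) (hs : 0 < t + t0) :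
    ∫ x : ℝ, barenblatt m t0 A x t =
      ∫ y : ℝ, (max (A^2 - (1/(m+1)) * (m-1) * y^2 / (2 * m)) 0) ^ (1/(m-1)) := by
  set k : ℝ := 1/(m+1) with hk
  set c : ℝ := (t + t0) ^ k with hc
  have hcpos : 0 < c := Real.rpow_pos_of_pos hs k
  have hc2 : (t + t0) ^ (2 * k) = c ^ 2 := by
    rw [hc, ← Real.rpow_natCast ((t + t0) ^ k) 2, ← Real.rpow_mul hs.le]
    norm_num [mul_comm]
  have key : ∀ x : ℝ, barenblatt m t0 A x t =
      c⁻¹ * (max (A^2 - k * (m-1) * (x / c)^2 / (2 * m)) 0) ^ (1/(m-1)) := by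
    intro x
    unfold barenblatt
    rw [Real.rpow_neg hs.le, ← hc, ← hk, hc2, div_pow]
    congr 3
    field_simp
  simp_rw [key]
  rw [integral_const_mul, Measure.integral_comp_div
    (fun y : ℝ => (max (A^2 - k * (m-1) * y^2 / (2 * m)) 0) ^ (1/(m-1))) c,
    abs_of_pos hcpos, smul_eq_mul, ← mul_assoc, inv_mul_cancel₀ hcpos.ne', one_mul]

/-- the total mass of the Barenblatt--Pattle solution is conserved. -/
theorem barenblatt_mass_conservation (m t0 A : ℝ) (hm : 1 < m) (ht0 : 0 < t0)
    (hA : A ≠ 0) :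
    ∀ t : ℝ, 0 ≤ t →
      ∫ x : ℝ, barenblatt m t0 A x t = ∫ x : ℝ, barenblatt m t0 A x 0 := by
  intro t ht
  rw [barenblatt_integral_eq m t0 A t (by linarith),
    barenblatt_integral_eq m t0 A 0 (by linarith)]
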